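/- Let (Γ,Ψ) be a G-gain graph on a finite group G of order k whose underlying graph Γ is connected, and let L(Γ,Ψ) be its cover graph. Then the following are equivalent: (i) (Γ,Ψ) is balanced; (ii) the adjacency spectrum of L(Γ,Ψ) consists of k copies of the adjacency spectrum of Γ; (iii) the largest adjacency eigenvalue of L(Γ,Ψ) equals the largest adjacency eigenvalue of Γ and occurs with multiplicity k; (iv) L(Γ,Ψ) is isomorphic to the disjoint union of k copies of Γ. -/

import Mathlib

/-!
On a connected graph, balance means that the gain function is a coboundary,
`Ψ(i,j) = θ(i)⁻¹ θ(j)`, and then `(u, g) ↦ (u, θ(u) g)` identifies the cover graph with `|G|`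
disjoint copies of `Γ`, whose characteristic polynomial is the `|G|`-th power of that of `Γ`.

Conversely, every connected component of the cover graph meets each fibre `{v} × G`, so there
are at most `|G|` components, and exactly `|G|` only if each fibre meets each component once. A
closed walk at `v` lifts to a walk from `(v, 1)` to `(v, gain⁻¹)`, so then every gain is `1`.

The spectral conditions are tied to components by a Perron–Frobenius bound: the multiplicity of
the largest adjacency eigenvalue `λ₁` is at most the number of components. Indeed, if `x` is a
`λ₁`-eigenvector then so is `|x|` (Rayleigh bound), so `x` vanishing at one vertex vanishes on
its whole component, and a `λ₁`-eigenvector is determined by its values at one vertex per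
component. For connected `Γ` the multiplicity is therefore `1`.
-/

open scoped Kronecker
open Matrix Polynomial Filter

namespace GainPaper

variable {G : Type*} [Group G]

/-- The gain of a walk: product of the gains of its darts. -/
def walkGain {n : ℕ} {Γ : SimpleGraph (Fin n)} {M : Type*} [Monoid M]
    (Ψ : Fin n → Fin n → M) {u v : Fin n} (p : Γ.Walk u v) : M :=
  (p.darts.map fun d => Ψ d.toProd.1 d.toProd.2).prod

/-- `Ψ` is a gain function on `Γ`: the gain of an edge in the reverse
orientation is the inverse of its gain. -/
def IsGain {n : ℕ} (Γ : SimpleGraph (Fin n)) (Ψ : Fin n → Fin n → G) : Prop :=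
  ∀ i j, Γ.Adj i j → Ψ j i = (Ψ i j)⁻¹

/-- A gain graph is balanced if every closed walk has gain `1`. -/
def IsBalanced {n : ℕ} (Γ : SimpleGraph (Fin n)) {M : Type*} [Monoid M]
    (Ψ : Fin n → Fin n → M) : Prop :=
  ∀ (v : Fin n) (p : Γ.Walk v v), walkGain Ψ p = 1

/-- The adjacency matrix of a gain graph, with entries in the group algebra ℂG. -/
noncomputable def gainAdj {n : ℕ} (Γ : SimpleGraph (Fin n)) [DecidableRel Γ.Adj]
    (Ψ : Fin n → Fin n → G) : Matrix (Fin n) (Fin n) (MonoidAlgebra ℂ G) :=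
  Matrix.of fun i j => if Γ.Adj i j then MonoidAlgebra.single (Ψ i j) 1 else 0

/-- The involution on ℂG: `(Σ f_x x)* = Σ conj(f_x) x⁻¹`. -/
noncomputable def starCG (f : MonoidAlgebra ℂ G) : MonoidAlgebra ℂ G :=
  f.coeff.sum fun x c => MonoidAlgebra.single x⁻¹ (starRingEnd ℂ c)

/-- The involution on M_n(ℂG): `(F*)_{i,j} = (F_{j,i})*`. -/
noncomputable def starM {n : ℕ} (F : Matrix (Fin n) (Fin n) (MonoidAlgebra ℂ G)) :
    Matrix (Fin n) (Fin n) (MonoidAlgebra ℂ G) :=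
  Matrix.of fun i j => starCG (F j i)

/-- The trace on M_n(ℂG): sum over the diagonal of the coefficients of `1_G`. -/
noncomputable def trCG {n : ℕ} (F : Matrix (Fin n) (Fin n) (MonoidAlgebra ℂ G)) : ℂ :=
  ∑ i, (F i i).coeff 1

/-- The Fourier transform of `f ∈ ℂG` at `π`: `Σ_x f(x) π(x)`. -/
noncomputable def fourier {m : Type*} (f : MonoidAlgebra ℂ G) (π : G → Matrix m m ℂ) :
    Matrix m m ℂ :=
  f.coeff.sum fun x c => c • π x

/-- The (finite) set of group elements appearing in some entry of `F`. -/
noncomputable def matSupport {n : ℕ} (F : Matrix (Fin n) (Fin n) (MonoidAlgebra ℂ G)) :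
    Finset G :=
  letI := Classical.decEq G
  Finset.univ.biUnion fun i : Fin n => Finset.univ.biUnion fun j : Fin n => (F i j).coeff.support

/-- `F(x)`: the complex matrix of coefficients of `x` in the entries of `F`. -/
def matCoeff {n : ℕ} (F : Matrix (Fin n) (Fin n) (MonoidAlgebra ℂ G)) (x : G) :
    Matrix (Fin n) (Fin n) ℂ :=
  Matrix.of fun i j => (F i j).coeff x

/-- Fourier transform of `F ∈ M_n(ℂG)` at `π`: `F̂(π) = Σ_{x∈G} F(x) ⊗ π(x)`. -/
noncomputable def fourierM {n : ℕ} {m : Type*} (F : Matrix (Fin n) (Fin n) (MonoidAlgebra ℂ G))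
    (π : G → Matrix m m ℂ) : Matrix (Fin n × m) (Fin n × m) ℂ :=
  ∑ x ∈ matSupport F, matCoeff F x ⊗ₖ π x

/-- A representation is unitary if each `π g` is a unitary matrix. -/
def IsUnitaryRep {m : Type*} [Fintype m] [DecidableEq m] (π : G →* Matrix m m ℂ) : Prop :=
  ∀ g, π g ∈ Matrix.unitaryGroup m ℂ

/-- Irreducibility: the space is nonzero and has no nontrivial invariant subspace. -/
def IsIrred {m : Type*} [Fintype m] [DecidableEq m] (π : G →* Matrix m m ℂ) : Prop :=
  Nonempty m ∧
    ∀ W : Submodule ℂ (m → ℂ), (∀ g, ∀ v ∈ W, (π g).mulVec v ∈ W) → W = ⊥ ∨ W = ⊤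

/-- Equivalence of two matrix representations: an invertible intertwiner. -/
def RepEquiv {m m' : Type*} [Fintype m] [DecidableEq m] [Fintype m'] [DecidableEq m']
    (π : G →* Matrix m m ℂ) (π' : G →* Matrix m' m' ℂ) : Prop :=
  ∃ e : (m → ℂ) ≃ₗ[ℂ] (m' → ℂ), ∀ g v, e ((π g).mulVec v) = (π' g).mulVec (e v)

/-- λ₁: the largest real root of the characteristic polynomial
(= the largest eigenvalue, for a Hermitian matrix). -/
noncomputable def lam1 {m : Type*} [Fintype m] [DecidableEq m] (M : Matrix m m ℂ) : ℝ :=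
  sSup {x : ℝ | M.charpoly.IsRoot (x : ℂ)}

/-- Spectral radius: the sup of the absolute values of the eigenvalues. -/
noncomputable def specRad {m : Type*} [Fintype m] [DecidableEq m] (M : Matrix m m ℂ) : ℝ :=
  sSup {r : ℝ | ∃ μ : ℂ, M.charpoly.IsRoot μ ∧ r = ‖μ‖}

/-- Adjacency relation of the cover graph on `V × G`:
`(u,g) ∼ (v,h)` iff `u ∼ v` and `h = Ψ(u,v)⁻¹ g`. -/
def coverAdj {n : ℕ} (Γ : SimpleGraph (Fin n)) (Ψ : Fin n → Fin n → G) (p q : Fin n × G) :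
    Prop :=
  Γ.Adj p.1 q.1 ∧ q.2 = (Ψ p.1 q.1)⁻¹ * p.2

/-- The {0,1} adjacency matrix of the cover graph. -/
noncomputable def coverMatrix {n : ℕ} [DecidableEq G] (Γ : SimpleGraph (Fin n))
    [DecidableRel Γ.Adj] (Ψ : Fin n → Fin n → G) : Matrix (Fin n × G) (Fin n × G) ℂ :=
  Matrix.of fun p q => if Γ.Adj p.1 q.1 ∧ q.2 = (Ψ p.1 q.1)⁻¹ * p.2 then 1 else 0

/-- The left regular representation, as matrices:
`λ_G(g)_{r,p} = 1` if `g = r p⁻¹`, else `0`. -/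
noncomputable def lamG [DecidableEq G] : G → Matrix G G ℂ :=
  fun g => Matrix.of fun r p => if g = r * p⁻¹ then 1 else 0

open scoped MatrixOrder ComplexOrder

lemma rootMultiplicity_pow {R : Type*} [CommRing R] [IsDomain R] (p : R[X]) (k : ℕ) (a : R) :
    (p ^ k).rootMultiplicity a = k * p.rootMultiplicity a := by
  classical
  rw [← count_roots, roots_pow, Multiset.count_nsmul, count_roots]

section HermitianSpectrum

variable {V : Type*} [Fintype V] [DecidableEq V] {A : Matrix V V ℂ}

lemma setOf_isRoot_charpoly_eq_range_eigenvalues (hA : A.IsHermitian) :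
    {x : ℝ | A.charpoly.IsRoot (x : ℂ)} = Set.range hA.eigenvalues := by
  ext x
  rw [Set.mem_ofPred_eq, ← mem_roots A.charpoly_monic.ne_zero, hA.roots_charpoly_eq_eigenvalues]
  simp

lemma eigenvalues_le_lam1 (hA : A.IsHermitian) (i : V) : hA.eigenvalues i ≤ lam1 A := by
  rw [lam1, setOf_isRoot_charpoly_eq_range_eigenvalues hA]
  exact le_csSup (Set.finite_range _).bddAbove (Set.mem_range_self i)

lemma isRoot_charpoly_lam1 [Nonempty V] (hA : A.IsHermitian) :
    A.charpoly.IsRoot (lam1 A : ℂ) := by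
  change lam1 A ∈ {x : ℝ | A.charpoly.IsRoot (x : ℂ)}
  rw [lam1, setOf_isRoot_charpoly_eq_range_eigenvalues hA]
  exact Set.Nonempty.csSup_mem (Set.range_nonempty _) (Set.finite_range _)

lemma le_algebraMap_of_eigenvalues_le (hA : A.IsHermitian) {t : ℝ}
    (ht : ∀ i, hA.eigenvalues i ≤ t) : A ≤ algebraMap ℝ (Matrix V V ℂ) t := by
  rw [le_algebraMap_iff_spectrum_le hA.isSelfAdjoint, hA.spectrum_real_eq_range_eigenvalues]
  rintro _ ⟨i, rfl⟩
  exact ht i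

lemma rootMultiplicity_charpoly_le_finrank_eigenspace (hA : A.IsHermitian) (μ : ℝ) :
    A.charpoly.rootMultiplicity (μ : ℂ) ≤
      Module.finrank ℂ (Module.End.eigenspace (toLin' A) (μ : ℂ)) := by
  have hcount : A.charpoly.rootMultiplicity (μ : ℂ) =
      Fintype.card {i // hA.eigenvalues i = μ} := by
    rw [← count_roots, hA.roots_charpoly_eq_eigenvalues, Multiset.count_map,
      Fintype.card_subtype]
    simp [eq_comm, Finset.card, Finset.filter_val]
  let f : {i // hA.eigenvalues i = μ} → Module.End.eigenspace (toLin' A) (μ : ℂ) :=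
    fun i => ⟨hA.eigenvectorBasis i, by
      rw [Module.End.mem_eigenspace_iff, toLin'_apply, hA.mulVec_eigenvectorBasis, i.2]
      rfl⟩
  have hf : LinearIndependent ℂ f := by
    refine LinearIndependent.of_comp (Submodule.subtype _) ?_
    exact (hA.eigenvectorBasis.toBasis.linearIndependent.map'
      (WithLp.linearEquiv 2 ℂ (V → ℂ)).toLinearMap (LinearEquiv.ker _)).comp _
      Subtype.val_injective
  rw [hcount]
  exact hf.fintype_card_le_finrank

end HermitianSpectrum

section AdjacencySpectrum

lemma isHermitian_adjMatrix {V : Type*} (Δ : SimpleGraph V) [DecidableRel Δ.Adj] :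
    (Δ.adjMatrix ℂ).IsHermitian := by
  ext i j
  simp [SimpleGraph.adjMatrix_apply, SimpleGraph.adj_comm, apply_ite (star : ℂ → ℂ)]

variable {V : Type*} [Fintype V] [DecidableEq V] {Δ : SimpleGraph V} [DecidableRel Δ.Adj]

/- `z := A|x| - t|x|` is entrywise nonnegative by the triangle inequality, while
`⟨|x|, z⟩ ≤ 0` because `t - A` is positive semidefinite; hence `⟨|x|, (t - A)|x|⟩ = 0`. -/
lemma adjMatrix_mulVec_norm_eq {t : ℝ}
    (ht : ∀ i, (isHermitian_adjMatrix Δ).eigenvalues i ≤ t) {x : V → ℂ}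
    (hx : Δ.adjMatrix ℂ *ᵥ x = (t : ℂ) • x) :
    Δ.adjMatrix ℂ *ᵥ (fun v => (‖x v‖ : ℂ)) = (t : ℂ) • fun v => (‖x v‖ : ℂ) := by
  set y : V → ℂ := fun v => (‖x v‖ : ℂ)
  set z : V → ℂ := Δ.adjMatrix ℂ *ᵥ y - (t : ℂ) • y
  have hPSD : (algebraMap ℝ (Matrix V V ℂ) t - Δ.adjMatrix ℂ).PosSemidef :=
    Matrix.le_iff.mp (le_algebraMap_of_eigenvalues_le _ ht)
  have hPSD_y : (algebraMap ℝ (Matrix V V ℂ) t - Δ.adjMatrix ℂ) *ᵥ y = -z := by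
    ext v
    simp [z, sub_mulVec, algebraMap_eq_diagonal, mulVec_diagonal]
  have hz : ∀ v, 0 ≤ z v := by
    intro v
    have hxv := congrFun hx v
    simp only [SimpleGraph.adjMatrix_mulVec_apply, Pi.smul_apply, smul_eq_mul] at hxv
    have : t * ‖x v‖ ≤ ∑ u ∈ Δ.neighborFinset v, ‖x u‖ :=
      calc t * ‖x v‖ ≤ ‖(t : ℂ) * x v‖ := by
            rw [norm_mul, Complex.norm_real, Real.norm_eq_abs]
            exact mul_le_mul_of_nonneg_right (le_abs_self t) (norm_nonneg _)
        _ ≤ ∑ u ∈ Δ.neighborFinset v, ‖x u‖ := hxv ▸ norm_sum_le _ _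
    simpa [z, y, SimpleGraph.adjMatrix_mulVec_apply, ← Complex.ofReal_mul,
      ← Complex.ofReal_sum, ← Complex.ofReal_sub, Complex.zero_le_real] using this
  have hyz : star y ⬝ᵥ z = 0 := by
    refine le_antisymm ?_ ?_
    · simpa [hPSD_y] using hPSD.dotProduct_mulVec_nonneg y
    · exact Finset.sum_nonneg fun v _ => mul_nonneg (by simp [y]) (hz v)
  have : (algebraMap ℝ (Matrix V V ℂ) t - Δ.adjMatrix ℂ) *ᵥ y = 0 := by
    rw [← hPSD.dotProduct_mulVec_zero_iff, hPSD_y, dotProduct_neg, hyz, neg_zero]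
  rwa [hPSD_y, neg_eq_zero, sub_eq_zero] at this

lemma eq_zero_of_reachable_of_mulVec_eq {t : ℝ}
    (ht : ∀ i, (isHermitian_adjMatrix Δ).eigenvalues i ≤ t) {x : V → ℂ}
    (hx : Δ.adjMatrix ℂ *ᵥ x = (t : ℂ) • x) {a b : V} (hab : Δ.Reachable a b) (ha : x a = 0) :
    x b = 0 := by
  obtain ⟨w⟩ := hab
  induction w with
  | nil => exact ha
  | @cons a c b hac _ ih =>
    refine ih ?_
    have hsum := congrFun (adjMatrix_mulVec_norm_eq ht hx) a
    simp only [SimpleGraph.adjMatrix_mulVec_apply, Pi.smul_apply, smul_eq_mul, ha, norm_zero,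
      Complex.ofReal_zero, mul_zero, ← Complex.ofReal_sum, Complex.ofReal_eq_zero] at hsum
    exact norm_eq_zero.mp <| (Finset.sum_eq_zero_iff_of_nonneg fun _ _ => norm_nonneg _).mp hsum c
      ((Δ.mem_neighborFinset a c).mpr hac)

lemma finrank_eigenspace_le_card_connectedComponent {t : ℝ}
    (ht : ∀ i, (isHermitian_adjMatrix Δ).eigenvalues i ≤ t) :
    Module.finrank ℂ (Module.End.eigenspace (toLin' (Δ.adjMatrix ℂ)) (t : ℂ)) ≤
      Nat.card Δ.ConnectedComponent := by
  let restrict : Module.End.eigenspace (toLin' (Δ.adjMatrix ℂ)) (t : ℂ) →ₗ[ℂ]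
      (Δ.ConnectedComponent → ℂ) :=
    (LinearMap.funLeft ℂ ℂ Quot.out).comp (Submodule.subtype _)
  have hinj : Function.Injective restrict := by
    rw [← LinearMap.ker_eq_bot, LinearMap.ker_eq_bot']
    rintro ⟨x, hx⟩ hx0
    rw [Module.End.mem_eigenspace_iff, toLin'_apply] at hx
    ext v
    refine eq_zero_of_reachable_of_mulVec_eq ht hx ?_ (congrFun hx0 (Δ.connectedComponentMk v))
    exact SimpleGraph.ConnectedComponent.exact (Quot.out_eq (Δ.connectedComponentMk v))
  simpa using LinearMap.finrank_le_finrank_of_injective hinj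

lemma rootMultiplicity_lam1_le_card_connectedComponent :
    (Δ.adjMatrix ℂ).charpoly.rootMultiplicity (lam1 (Δ.adjMatrix ℂ) : ℂ) ≤
      Nat.card Δ.ConnectedComponent :=
  (rootMultiplicity_charpoly_le_finrank_eigenspace (isHermitian_adjMatrix Δ) _).trans
    (finrank_eigenspace_le_card_connectedComponent (eigenvalues_le_lam1 _))

lemma rootMultiplicity_lam1_eq_one (hΔ : Δ.Connected) :
    (Δ.adjMatrix ℂ).charpoly.rootMultiplicity (lam1 (Δ.adjMatrix ℂ) : ℂ) = 1 := by
  have : Nonempty V := hΔ.nonempty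
  refine le_antisymm ?_ ?_
  · exact rootMultiplicity_lam1_le_card_connectedComponent.trans
      (Finite.card_le_one_iff_subsingleton.mpr hΔ.preconnected.subsingleton_connectedComponent)
  · exact (rootMultiplicity_pos (Δ.adjMatrix ℂ).charpoly_monic.ne_zero).mpr
      (isRoot_charpoly_lam1 (isHermitian_adjMatrix Δ))

lemma lam1_eq_and_rootMultiplicity_eq_of_charpoly_eq_pow (hΔ : Δ.Connected) {m : Type*}
    [Fintype m] [DecidableEq m] {M : Matrix m m ℂ} {k : ℕ}
    (h : M.charpoly = (Δ.adjMatrix ℂ).charpoly ^ k) (hk : k ≠ 0) :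
    lam1 M = lam1 (Δ.adjMatrix ℂ) ∧
      M.charpoly.rootMultiplicity (lam1 (Δ.adjMatrix ℂ) : ℂ) = k := by
  refine ⟨?_, by rw [h, rootMultiplicity_pow, rootMultiplicity_lam1_eq_one hΔ, mul_one]⟩
  simp only [lam1, h, IsRoot.def, eval_pow, pow_eq_zero_iff hk]

end AdjacencySpectrum

section WalkGain

variable {n : ℕ} {Γ : SimpleGraph (Fin n)}

@[simp] lemma walkGain_nil {M : Type*} [Monoid M] (Ψ : Fin n → Fin n → M) {u : Fin n} :
    walkGain Ψ (SimpleGraph.Walk.nil : Γ.Walk u u) = 1 := rfl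

@[simp] lemma walkGain_cons {M : Type*} [Monoid M] (Ψ : Fin n → Fin n → M) {u v w : Fin n}
    (h : Γ.Adj u v) (p : Γ.Walk v w) :
    walkGain Ψ (SimpleGraph.Walk.cons h p) = Ψ u v * walkGain Ψ p := by
  simp [walkGain]

@[simp] lemma walkGain_append {M : Type*} [Monoid M] (Ψ : Fin n → Fin n → M) {u v w : Fin n}
    (p : Γ.Walk u v) (q : Γ.Walk v w) :
    walkGain Ψ (p.append q) = walkGain Ψ p * walkGain Ψ q := by
  simp [walkGain, SimpleGraph.Walk.darts_append]

variable {Ψ : Fin n → Fin n → G}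

lemma walkGain_reverse (hΨ : IsGain Γ Ψ) {u v : Fin n} (p : Γ.Walk u v) :
    walkGain Ψ p.reverse = (walkGain Ψ p)⁻¹ := by
  induction p with
  | nil => simp
  | cons h p ih => simp [ih, hΨ _ _ h]

lemma IsBalanced.exists_potential (hconn : Γ.Connected) (hΨ : IsGain Γ Ψ)
    (hbal : IsBalanced Γ Ψ) : ∃ θ : Fin n → G, ∀ i j, Γ.Adj i j → Ψ i j = (θ i)⁻¹ * θ j := by
  obtain ⟨v₀⟩ := hconn.nonempty
  let walk (u : Fin n) : Γ.Walk v₀ u := (hconn.preconnected v₀ u).some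
  refine ⟨fun u => walkGain Ψ (walk u), fun i j hij => ?_⟩
  have hcycle := hbal v₀ (((walk i).append (.cons hij .nil)).append (walk j).reverse)
  simp only [walkGain_append, walkGain_cons, walkGain_nil, mul_one, walkGain_reverse hΨ,
    mul_inv_eq_one] at hcycle
  exact eq_inv_mul_iff_mul_eq.mpr hcycle

end WalkGain

section CoverGraph

variable {n : ℕ} {Γ : SimpleGraph (Fin n)} {Ψ : Fin n → Fin n → G}

variable (Γ Ψ) in
def coverGraph (hΨ : IsGain Γ Ψ) : SimpleGraph (Fin n × G) where
  Adj := coverAdj Γ Ψ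
  symm := ⟨by
    rintro p q ⟨hadj, he⟩
    refine ⟨hadj.symm, ?_⟩
    rw [hΨ _ _ hadj, he]
    group⟩
  loopless := ⟨fun p h => Γ.loopless.irrefl p.1 h.1⟩

instance [DecidableEq G] [DecidableRel Γ.Adj] (hΨ : IsGain Γ Ψ) :
    DecidableRel (coverGraph Γ Ψ hΨ).Adj :=
  fun p q => inferInstanceAs (Decidable (Γ.Adj p.1 q.1 ∧ q.2 = (Ψ p.1 q.1)⁻¹ * p.2))

lemma adjMatrix_coverGraph [DecidableEq G] [DecidableRel Γ.Adj] (hΨ : IsGain Γ Ψ) :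
    (coverGraph Γ Ψ hΨ).adjMatrix ℂ = coverMatrix Γ Ψ :=
  rfl

lemma reachable_coverGraph_of_walk (hΨ : IsGain Γ Ψ) {u v : Fin n} (p : Γ.Walk u v) (g : G) :
    (coverGraph Γ Ψ hΨ).Reachable (u, g) (v, (walkGain Ψ p)⁻¹ * g) := by
  induction p generalizing g with
  | nil => simp
  | @cons a b c h p ih =>
    have hstep : (coverGraph Γ Ψ hΨ).Adj (a, g) (b, (Ψ a b)⁻¹ * g) := ⟨h, rfl⟩
    simpa [mul_assoc] using hstep.reachable.trans (ih ((Ψ a b)⁻¹ * g))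

lemma surjective_connectedComponentMk_fiber (hconn : Γ.Preconnected) (hΨ : IsGain Γ Ψ)
    (v : Fin n) :
    Function.Surjective fun g : G => (coverGraph Γ Ψ hΨ).connectedComponentMk (v, g) := by
  intro c
  obtain ⟨⟨u, h⟩, rfl⟩ := c.exists_rep
  obtain ⟨p⟩ := hconn u v
  exact ⟨_, (SimpleGraph.ConnectedComponent.sound (reachable_coverGraph_of_walk hΨ p h)).symm⟩

lemma isBalanced_of_card_le_card_connectedComponent [Finite G] (hconn : Γ.Preconnected)
    (hΨ : IsGain Γ Ψ) (hk : Nat.card G ≤ Nat.card (coverGraph Γ Ψ hΨ).ConnectedComponent) :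
    IsBalanced Γ Ψ := by
  intro v p
  have hinj := ((surjective_connectedComponentMk_fiber hconn hΨ v).bijective_of_nat_card_le
    hk).injective
  have hlift := SimpleGraph.ConnectedComponent.sound (reachable_coverGraph_of_walk hΨ p 1)
  simpa using (hinj hlift).symm

end CoverGraph

section Potential

variable {n : ℕ} {Γ : SimpleGraph (Fin n)} {Ψ : Fin n → Fin n → G}

lemma coverAdj_iff_of_potential {θ : Fin n → G} (hθ : ∀ i j, Γ.Adj i j → Ψ i j = (θ i)⁻¹ * θ j)
    (p q : Fin n × G) :
    let e := Equiv.prodShear (Equiv.refl _) fun i => Equiv.mulLeft (θ i)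
    coverAdj Γ Ψ p q ↔ Γ.Adj (e p).1 (e q).1 ∧ (e p).2 = (e q).2 := by
  simp only [coverAdj, Equiv.prodShear_apply, Equiv.coe_refl, id, Equiv.coe_mulLeft]
  refine and_congr_right fun h => ?_
  rw [hθ _ _ h, _root_.mul_inv_rev, inv_inv, mul_assoc, eq_inv_mul_iff_mul_eq, eq_comm]

lemma IsBalanced.exists_equiv_coverAdj (hconn : Γ.Connected) (hΨ : IsGain Γ Ψ)
    (hbal : IsBalanced Γ Ψ) :
    ∃ e : (Fin n × G) ≃ (Fin n × G),
      ∀ p q, coverAdj Γ Ψ p q ↔ Γ.Adj (e p).1 (e q).1 ∧ (e p).2 = (e q).2 := by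
  obtain ⟨θ, hθ⟩ := hbal.exists_potential hconn hΨ
  exact ⟨_, coverAdj_iff_of_potential hθ⟩

end Potential

lemma charpoly_blockDiagonal_const {m o R : Type*} [CommRing R] [DecidableEq m] [Fintype m]
    [DecidableEq o] [Fintype o] (M : Matrix m m R) :
    (blockDiagonal fun _ : o => M).charpoly = M.charpoly ^ Fintype.card o := by
  have hcharmatrix : charmatrix (blockDiagonal fun _ : o => M) =
      blockDiagonal fun _ : o => charmatrix M := by
    ext ⟨i, k⟩ ⟨j, k'⟩
    by_cases hk : k = k' <;> by_cases hij : i = j <;>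
      simp [blockDiagonal_apply, hk, hij]
  rw [charpoly, hcharmatrix, det_blockDiagonal, Finset.prod_const, Finset.card_univ, charpoly]

section CoverSpectrum

variable [DecidableEq G] {n : ℕ} {Γ : SimpleGraph (Fin n)} [DecidableRel Γ.Adj]
  {Ψ : Fin n → Fin n → G}

lemma coverMatrix_eq_submatrix_blockDiagonal {e : (Fin n × G) ≃ (Fin n × G)}
    (he : ∀ p q, coverAdj Γ Ψ p q ↔ Γ.Adj (e p).1 (e q).1 ∧ (e p).2 = (e q).2) :
    coverMatrix Γ Ψ = (blockDiagonal fun _ : G => Γ.adjMatrix ℂ).submatrix e e := by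
  ext p q
  have hpq := he p q
  simp only [coverAdj] at hpq
  simp only [coverMatrix, of_apply, submatrix_apply, blockDiagonal_apply,
    SimpleGraph.adjMatrix_apply, hpq]
  split_ifs <;> simp_all

lemma charpoly_coverMatrix_of_equiv [Fintype G] {e : (Fin n × G) ≃ (Fin n × G)}
    (he : ∀ p q, coverAdj Γ Ψ p q ↔ Γ.Adj (e p).1 (e q).1 ∧ (e p).2 = (e q).2) :
    (coverMatrix Γ Ψ).charpoly = (Γ.adjMatrix ℂ).charpoly ^ Fintype.card G := by
  rw [coverMatrix_eq_submatrix_blockDiagonal he, ← e.symm_symm, ← reindex_apply, charpoly_reindex,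
    charpoly_blockDiagonal_const]

lemma isBalanced_of_lam1_coverMatrix_eq [Fintype G] (hconn : Γ.Preconnected) (hΨ : IsGain Γ Ψ)
    (h : lam1 (coverMatrix Γ Ψ) = lam1 (Γ.adjMatrix ℂ) ∧
      (coverMatrix Γ Ψ).charpoly.rootMultiplicity (lam1 (Γ.adjMatrix ℂ) : ℂ) = Fintype.card G) :
    IsBalanced Γ Ψ := by
  refine isBalanced_of_card_le_card_connectedComponent hconn hΨ ?_
  have := rootMultiplicity_lam1_le_card_connectedComponent (Δ := coverGraph Γ Ψ hΨ)
  rwa [adjMatrix_coverGraph, h.1, h.2, ← Nat.card_eq_fintype_card] at this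

end CoverSpectrum

/-- balance of a connected gain graph on a finite group of order `k`,
characterized via the spectrum, the index (with multiplicity) and the structure of
the cover graph. -/
theorem statement18 {G : Type*} [Group G] [Fintype G] [DecidableEq G] {n : ℕ}
    (Γ : SimpleGraph (Fin n)) [DecidableRel Γ.Adj] (hconn : Γ.Connected)
    (Ψ : Fin n → Fin n → G) (hΨ : IsGain Γ Ψ) :
    (IsBalanced Γ Ψ ↔
      (coverMatrix Γ Ψ).charpoly = (Γ.adjMatrix ℂ).charpoly ^ Fintype.card G) ∧
    (IsBalanced Γ Ψ ↔
      lam1 (coverMatrix Γ Ψ) = lam1 (Γ.adjMatrix ℂ) ∧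
      (coverMatrix Γ Ψ).charpoly.rootMultiplicity ((lam1 (Γ.adjMatrix ℂ) : ℂ)) =
        Fintype.card G) ∧
    (IsBalanced Γ Ψ ↔
      ∃ e : (Fin n × G) ≃ (Fin n × G),
        ∀ p q, coverAdj Γ Ψ p q ↔ (Γ.Adj (e p).1 (e q).1 ∧ (e p).2 = (e q).2)) := by
  have h14 := IsBalanced.exists_equiv_coverAdj hconn hΨ
  have h12 := fun hbal => (h14 hbal).elim fun _ he => charpoly_coverMatrix_of_equiv he
  have h23 := fun hchar => lam1_eq_and_rootMultiplicity_eq_of_charpoly_eq_pow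
    (M := coverMatrix Γ Ψ) hconn hchar (Fintype.card_ne_zero (α := G))
  have h31 := isBalanced_of_lam1_coverMatrix_eq hconn.preconnected hΨ
  exact ⟨⟨h12, h31 ∘ h23⟩, ⟨h23 ∘ h12, h31⟩,
    ⟨h14, fun ⟨_, he⟩ => h31 (h23 (charpoly_coverMatrix_of_equiv he))⟩⟩

end GainPaper
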